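/- arXiv:2306.11842 — 5 statements merged into one kernel-verified Lean document; each statement's English description precedes it below -/
import Mathlib

section
/- (Lemma 1, exact form.) Let E be a finite-dimensional complex inner product space, G a self-adjoint continuous linear operator on E with G ∘ G = id, and v ∈ E a unit vector. Then for all real θ and δ, ‖(exp(-I·(θ+δ)·G) - exp(-I·θ·G)) v‖² = 4 · sin²(δ/2). In particular this quantity does not depend on θ. -/
open scoped InnerProductSpace

set_option maxHeartbeats 1000000 in
/-- Exponential of `-(I t) • G` for an involution `G`. -/
theorem exp_neg_I_smul_involution
    {E : Type*} [NormedAddCommGroup E] [InnerProductSpace ℂ E] [FiniteDimensional ℂ E]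
    (G : E →L[ℂ] E) (hG2 : G * G = 1) (t : ℝ) :
    NormedSpace.exp ((-(Complex.I * (t : ℂ))) • G)
      = ((Real.cos t : ℂ)) • (1 : E →L[ℂ] E) + (-(Complex.I * (Real.sin t : ℂ))) • G := by
  suffices h : ∀ z : ℂ, z = -(Complex.I * (t : ℂ)) → NormedSpace.exp (z • G)
      = ((Real.cos t : ℂ)) • (1 : E →L[ℂ] E) + (-(Complex.I * (Real.sin t : ℂ))) • G by
    exact h _ rfl
  intro z hz
  have hsum : HasSum (fun n : ℕ => ((n.factorial : ℂ))⁻¹ • (z • G) ^ n)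
      (NormedSpace.exp (z • G)) := NormedSpace.exp_series_hasSum_exp' (𝕂 := ℂ) (z • G)
  have hterm : ∀ n : ℕ, ((n.factorial : ℂ))⁻¹ • (z • G) ^ n
      = (z ^ n / (n.factorial : ℂ)) • G ^ n := by
    intro n
    rw [smul_pow, smul_smul, div_eq_inv_mul]
  have heven : ∀ k : ℕ, G ^ (2 * k) = 1 := by
    intro k
    rw [pow_mul, sq, hG2, one_pow]
  have hodd : ∀ k : ℕ, G ^ (2 * k + 1) = G := by
    intro k
    rw [pow_succ, heven, one_mul]
  have hzpow_even : ∀ k : ℕ, z ^ (2 * k) = ((t : ℂ) * Complex.I) ^ (2 * k) := by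
    intro k
    rw [hz, mul_comm Complex.I ((t : ℂ)), pow_mul, pow_mul, neg_sq]
  have hzpow_odd : ∀ k : ℕ, z ^ (2 * k + 1) = -(((t : ℂ) * Complex.I) ^ (2 * k + 1)) := by
    intro k
    rw [hz, mul_comm Complex.I ((t : ℂ)), neg_pow, pow_succ (-1 : ℂ), neg_one_pow_eq_one_iff_even
      (by norm_num : (-1 : ℂ) ≠ 1) |>.mpr ⟨k, (two_mul k).symm ▸ by ring⟩]
    ring
  have hcos : HasSum (fun k : ℕ => (z ^ (2 * k) / ((2 * k).factorial : ℂ)) • G ^ (2 * k))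
      ((Complex.cos (t : ℂ)) • (1 : E →L[ℂ] E)) := by
    have := (Complex.hasSum_cos' (t : ℂ)).smul_const (1 : E →L[ℂ] E)
    refine this.congr_fun fun k => ?_
    rw [heven, hzpow_even]
  have hsin : HasSum (fun k : ℕ => (z ^ (2 * k + 1) / ((2 * k + 1).factorial : ℂ)) • G ^ (2 * k + 1))
      ((-(Complex.I * Complex.sin (t : ℂ))) • G) := by
    have h1 := ((Complex.hasSum_sin' (t : ℂ)).mul_right Complex.I).neg.smul_const G
    convert h1 using 2 with k
    · rw [hodd, hzpow_odd, div_mul_cancel₀ _ Complex.I_ne_zero, neg_div]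
    · rw [mul_comm]
  have htotal : HasSum (fun n : ℕ => (z ^ n / (n.factorial : ℂ)) • G ^ n)
      ((Complex.cos (t : ℂ)) • (1 : E →L[ℂ] E) + (-(Complex.I * Complex.sin (t : ℂ))) • G) :=
    HasSum.even_add_odd (f := fun n : ℕ => (z ^ n / (n.factorial : ℂ)) • G ^ n) hcos hsin
  rw [show (fun n : ℕ => ((n.factorial : ℂ))⁻¹ • (z • G) ^ n)
      = (fun n : ℕ => (z ^ n / (n.factorial : ℂ)) • G ^ n) from funext hterm] at hsum
  rw [Complex.ofReal_cos, Complex.ofReal_sin]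
  exact hsum.unique htotal

lemma norm_sq_aux {E : Type*} [NormedAddCommGroup E] [InnerProductSpace ℂ E]
    (x y : E) (hxy : (⟪x, y⟫_ℂ).im = 0) (a b : ℝ) :
    ‖(a : ℂ) • x + (-(Complex.I * (b : ℂ))) • y‖ ^ 2
      = a ^ 2 * ‖x‖ ^ 2 + b ^ 2 * ‖y‖ ^ 2 := by
  rw [@norm_add_sq ℂ, inner_smul_left, inner_smul_right, norm_smul, norm_smul]
  have h1 : (starRingEnd ℂ) ((a : ℂ)) = (a : ℂ) := Complex.conj_ofReal a
  have h2 : RCLike.re ((starRingEnd ℂ) ((a : ℂ)) * ((-(Complex.I * (b : ℂ))) * ⟪x, y⟫_ℂ)) = 0 := by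
    rw [h1]
    simp [Complex.mul_re, Complex.mul_im, hxy]
  rw [h2]
  have h3 : ‖((a : ℂ))‖ = |a| := by rw [Complex.norm_real, Real.norm_eq_abs]
  have h4 : ‖(-(Complex.I * (b : ℂ)))‖ = |b| := by
    rw [norm_neg, norm_mul, Complex.norm_I, one_mul, Complex.norm_real, Real.norm_eq_abs]
  rw [h3, h4]
  ring_nf
  rw [sq_abs, sq_abs]
  ring

/-- Lemma 1 (exact form): for a self-adjoint involution `G` and a unit vector `v`,
`‖(exp(-I·(θ+δ)·G) - exp(-I·θ·G)) v‖² = 4 sin²(δ/2)`, independently of `θ`. -/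
theorem norm_sq_exp_diff_involution
    {E : Type*} [NormedAddCommGroup E] [InnerProductSpace ℂ E] [FiniteDimensional ℂ E]
    (G : E →L[ℂ] E) (hG : IsSelfAdjoint G) (hG2 : G * G = 1)
    (v : E) (hv : ‖v‖ = 1) (θ δ : ℝ) :
    ‖(NormedSpace.exp ((-(Complex.I * ((θ + δ : ℝ) : ℂ))) • G)
        - NormedSpace.exp ((-(Complex.I * (θ : ℂ))) • G)) v‖ ^ 2
      = 4 * Real.sin (δ / 2) ^ 2 := by
  have hGsym : ∀ x y : E, ⟪G x, y⟫_ℂ = ⟪x, G y⟫_ℂ :=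
    ContinuousLinearMap.isSelfAdjoint_iff_isSymmetric.mp hG
  have hGG : ∀ x : E, G (G x) = x := by
    intro x
    have := congrArg (fun T : E →L[ℂ] E => T x) hG2
    simpa using this
  have him : (⟪v, G v⟫_ℂ).im = 0 := by
    have h1 : ⟪G v, v⟫_ℂ = ⟪v, G v⟫_ℂ := hGsym v v
    have h2 : (starRingEnd ℂ) ⟪v, G v⟫_ℂ = ⟪G v, v⟫_ℂ := inner_conj_symm (G v) v
    rw [h1] at h2
    exact Complex.conj_eq_iff_im.mp h2
  have hGv : ‖G v‖ = 1 := by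
    have h1 : ⟪G v, G v⟫_ℂ = ⟪v, v⟫_ℂ := by rw [hGsym v (G v), hGG]
    have h3 : ‖G v‖ ^ 2 = ‖v‖ ^ 2 := by
      rw [← inner_self_eq_norm_sq (𝕜 := ℂ), ← inner_self_eq_norm_sq (𝕜 := ℂ), h1]
    nlinarith [norm_nonneg (G v), norm_nonneg v, hv]
  rw [exp_neg_I_smul_involution G hG2 (θ + δ), exp_neg_I_smul_involution G hG2 θ]
  have happ : (((Real.cos (θ + δ) : ℂ)) • (1 : E →L[ℂ] E)
        + (-(Complex.I * (Real.sin (θ + δ) : ℂ))) • G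
      - (((Real.cos θ : ℂ)) • (1 : E →L[ℂ] E) + (-(Complex.I * (Real.sin θ : ℂ))) • G)) v
      = ((Real.cos (θ + δ) - Real.cos θ : ℝ) : ℂ) • v
        + (-(Complex.I * ((Real.sin (θ + δ) - Real.sin θ : ℝ) : ℂ))) • (G v) := by
    simp only [ContinuousLinearMap.sub_apply, ContinuousLinearMap.add_apply,
      ContinuousLinearMap.smul_apply, ContinuousLinearMap.one_apply]
    push_cast
    module
  rw [happ, norm_sq_aux v (G v) him, hv, hGv]
  have h1 := Real.sin_sq_add_cos_sq θ
  have h7 := Real.sin_sq_add_cos_sq δ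
  have h3 : Real.cos δ = 1 - 2 * Real.sin (δ / 2) ^ 2 := by
    have h4 := Real.sin_sq_add_cos_sq (δ / 2)
    have h5 := Real.cos_two_mul (δ / 2)
    rw [show 2 * (δ / 2) = δ by ring] at h5
    nlinarith
  rw [Real.cos_add, Real.sin_add]
  nlinarith [h1, h7, h3]
end

section
/- (Lemma 1, limit form.) Let E be a finite-dimensional complex inner product space, G a self-adjoint continuous linear operator on E with G ∘ G = id, v ∈ E a unit vector, and θ ∈ ℝ. Define ε(δ) = (exp(-I·(θ+δ)·G) - exp(-I·θ·G)) v. Then ‖ε(δ)‖ / |δ| tends to 1 as δ → 0 (δ ≠ 0). -/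
open scoped InnerProductSpace Topology

open Complex in
/-- Closed form for the exponential of `-(I·t)•G` when `G² = 1`. -/
lemma exp_involution_formula {E : Type*} [NormedAddCommGroup E] [InnerProductSpace ℂ E]
    [FiniteDimensional ℂ E] (G : E →L[ℂ] E) (hG2 : G * G = 1) (t : ℝ) :
    NormedSpace.exp ((-(Complex.I * (t : ℂ))) • G)
      = (Complex.cos t) • (1 : E →L[ℂ] E) + (-(Complex.I * Complex.sin t)) • G := by
  have hGsq : G ^ 2 = 1 := by rw [sq, hG2]
  have hEven : ∀ k : ℕ, G ^ (2 * k) = 1 := fun k => by rw [pow_mul, hGsq, one_pow]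
  have hOdd : ∀ k : ℕ, G ^ (2 * k + 1) = G := fun k => by
    rw [pow_succ, hEven, one_mul]
  have key : HasSum (fun n : ℕ => ((n.factorial : ℂ))⁻¹ • ((-(Complex.I * (t : ℂ))) • G) ^ n)
      ((Complex.cos t) • (1 : E →L[ℂ] E) + (-(Complex.I * Complex.sin t)) • G) := by
    refine HasSum.even_add_odd ?_ ?_
    · have h := (Complex.hasSum_cos (t : ℂ)).smul_const (1 : E →L[ℂ] E)
      refine h.congr_fun fun k => ?_
      rw [smul_pow, hEven, Even.neg_pow (even_two_mul k), mul_pow, pow_mul, Complex.I_sq,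
        smul_smul]
      congr 1
      ring
    · have h := ((Complex.hasSum_sin (t : ℂ)).mul_left (-Complex.I)).smul_const G
      have : (-Complex.I) * Complex.sin (t : ℂ) = -(Complex.I * Complex.sin t) := by ring
      rw [this] at h
      refine h.congr_fun fun k => ?_
      rw [smul_pow, hOdd, Odd.neg_pow ⟨k, by ring⟩, mul_pow, pow_succ, pow_mul, Complex.I_sq,
        smul_smul]
      congr 1
      ring
  rw [NormedSpace.exp_eq_tsum ℂ]
  exact key.tsum_eq

/-- Lemma 1 (limit form): with `ε(δ) = (exp(-I·(θ+δ)·G) - exp(-I·θ·G)) v` for a self-adjoint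
involution `G` and a unit vector `v`, the quantity `‖ε(δ)‖ / |δ|` tends to `1` as `δ → 0`. -/
theorem tendsto_norm_exp_diff_div_abs
    {E : Type*} [NormedAddCommGroup E] [InnerProductSpace ℂ E] [FiniteDimensional ℂ E]
    (G : E →L[ℂ] E) (hG : IsSelfAdjoint G) (hG2 : G * G = 1)
    (v : E) (hv : ‖v‖ = 1) (θ : ℝ) :
    Filter.Tendsto
      (fun δ : ℝ =>
        ‖(NormedSpace.exp ((-(Complex.I * ((θ + δ : ℝ) : ℂ))) • G)
            - NormedSpace.exp ((-(Complex.I * (θ : ℂ))) • G)) v‖ / |δ|)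
      (𝓝[≠] 0) (𝓝 1) := by
  -- `G v` has norm 1 and `G (G v) = v`
  have hGGv : G (G v) = v := by
    have := congrArg (fun T : E →L[ℂ] E => T v) hG2
    simpa using this
  have hGv : ‖G v‖ = 1 := by
    have hsymm : ∀ x y : E, ⟪G x, y⟫_ℂ = ⟪x, G y⟫_ℂ := fun x y => by
      simpa using hG.isSymmetric x y
    have h1 : (‖G v‖ : ℝ) ^ 2 = 1 := by
      have h2 : (⟪G v, G v⟫_ℂ) = ⟪v, v⟫_ℂ := by rw [hsymm, hGGv]
      rw [inner_self_eq_norm_sq_to_K, inner_self_eq_norm_sq_to_K, hv] at h2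
      have h3 : ‖G v‖ ^ 2 = 1 ^ 2 := by exact_mod_cast h2
      simpa using h3
    nlinarith [norm_nonneg (G v)]
  have hsymm : ∀ x y : E, ⟪G x, y⟫_ℂ = ⟪x, G y⟫_ℂ := fun x y => by
    simpa using hG.isSymmetric x y
  have hvGv : (starRingEnd ℂ) ⟪v, G v⟫_ℂ = ⟪v, G v⟫_ℂ := by
    rw [inner_conj_symm, hsymm]
  -- the key norm identity
  have hnorm : ∀ δ : ℝ,
      ‖(NormedSpace.exp ((-(Complex.I * ((θ + δ : ℝ) : ℂ))) • G)
        - NormedSpace.exp ((-(Complex.I * (θ : ℂ))) • G)) v‖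
      = 2 * |Real.sin (δ / 2)| := by
    intro δ
    rw [exp_involution_formula G hG2, exp_involution_formula G hG2]
    set a : ℝ := Real.cos (θ + δ) - Real.cos θ with ha
    set b : ℝ := Real.sin (θ + δ) - Real.sin θ with hb
    have happ :
        ((Complex.cos ((θ + δ : ℝ) : ℂ)) • (1 : E →L[ℂ] E)
            + (-(Complex.I * Complex.sin ((θ + δ : ℝ) : ℂ))) • G
          - ((Complex.cos ((θ : ℝ) : ℂ)) • (1 : E →L[ℂ] E)
            + (-(Complex.I * Complex.sin ((θ : ℝ) : ℂ))) • G)) v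
        = (a : ℂ) • v - (Complex.I * (b : ℂ)) • G v := by
      simp only [ContinuousLinearMap.sub_apply, ContinuousLinearMap.add_apply,
        ContinuousLinearMap.smul_apply, ContinuousLinearMap.one_apply]
      rw [ha, hb]
      push_cast [← Complex.ofReal_cos, ← Complex.ofReal_sin]
      module
    rw [happ]
    have hsq : ‖(a : ℂ) • v - (Complex.I * (b : ℂ)) • G v‖ ^ 2 = a ^ 2 + b ^ 2 := by
      rw [@norm_sub_sq ℂ]
      have h1 : ‖(a : ℂ) • v‖ = |a| := by
        rw [norm_smul, hv, mul_one, Complex.norm_real, Real.norm_eq_abs]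
      have h2 : ‖(Complex.I * (b : ℂ)) • G v‖ = |b| := by
        rw [norm_smul, hGv, mul_one, norm_mul, Complex.norm_I, one_mul,
          Complex.norm_real, Real.norm_eq_abs]
      have h3 : RCLike.re (⟪(a : ℂ) • v, (Complex.I * (b : ℂ)) • G v⟫_ℂ) = 0 := by
        rw [inner_smul_left, inner_smul_right]
        set r := ⟪v, G v⟫_ℂ with hr
        have hrim : r.im = 0 := by
          have := congrArg Complex.im hvGv
          simp only [Complex.conj_im] at this
          rw [hr]
          linarith
        simp [Complex.mul_re, Complex.mul_im, hrim]
      rw [h1, h2, h3, sq_abs, sq_abs]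
      ring
    have hnn : (0:ℝ) ≤ a ^ 2 + b ^ 2 := by positivity
    have : ‖(a : ℂ) • v - (Complex.I * (b : ℂ)) • G v‖ = Real.sqrt (a ^ 2 + b ^ 2) := by
      rw [← hsq, Real.sqrt_sq (norm_nonneg _)]
    rw [this]
    have hab : a ^ 2 + b ^ 2 = (2 * |Real.sin (δ / 2)|) ^ 2 := by
      have hcos : Real.cos (θ + δ) * Real.cos θ + Real.sin (θ + δ) * Real.sin θ
          = Real.cos δ := by
        rw [← Real.cos_sub]; ring_nf
      have hhalf : Real.cos δ = 1 - 2 * Real.sin (δ / 2) ^ 2 := by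
        have h := Real.cos_two_mul (δ / 2)
        have h2 := Real.sin_sq_add_cos_sq (δ / 2)
        rw [show (2:ℝ) * (δ / 2) = δ by ring] at h
        nlinarith
      have hs1 : Real.sin (θ+δ) ^ 2 + Real.cos (θ+δ) ^ 2 = 1 := Real.sin_sq_add_cos_sq _
      have hs2 : Real.sin θ ^ 2 + Real.cos θ ^ 2 = 1 := Real.sin_sq_add_cos_sq _
      have habs : |Real.sin (δ / 2)| ^ 2 = Real.sin (δ / 2) ^ 2 := sq_abs _
      rw [ha, hb]
      nlinarith
    rw [hab, Real.sqrt_sq (by positivity)]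
  -- reduce to the standard limit `sin x / x → 1`
  have hslope : Filter.Tendsto (fun x : ℝ => Real.sin x / x) (𝓝[≠] 0) (𝓝 1) := by
    have := hasDerivAt_iff_tendsto_slope.mp (Real.hasDerivAt_sin 0)
    rw [Real.cos_zero] at this
    refine this.congr' ?_
    filter_upwards [self_mem_nhdsWithin] with x hx
    simp [slope, Real.sin_zero, div_eq_inv_mul]
  have hhalf : Filter.Tendsto (fun δ : ℝ => δ / 2) (𝓝[≠] 0) (𝓝[≠] 0) := by
    refine tendsto_nhdsWithin_of_tendsto_nhds_of_eventually_within _ ?_ ?_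
    · simpa using (continuous_id.div_const 2).tendsto' 0 0 (by norm_num) |>.mono_left
        nhdsWithin_le_nhds
    · filter_upwards [self_mem_nhdsWithin] with x hx
      exact div_ne_zero hx two_ne_zero
  have hcomp : Filter.Tendsto (fun δ : ℝ => Real.sin (δ / 2) / (δ / 2)) (𝓝[≠] 0) (𝓝 1) :=
    hslope.comp hhalf
  have habs : Filter.Tendsto (fun δ : ℝ => |Real.sin (δ / 2) / (δ / 2)|) (𝓝[≠] 0) (𝓝 1) := by
    have := (continuous_abs.tendsto 1).comp hcomp
    simpa [Function.comp_def] using this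
  refine habs.congr' ?_
  filter_upwards [self_mem_nhdsWithin] with δ hδ
  have hδ' : δ ≠ 0 := hδ
  rw [hnorm δ, abs_div, abs_div, abs_two, div_div_eq_mul_div]
  ring
end

section
/- (Derivative of the expectation value along a rotation.) Let E be a finite-dimensional complex inner product space, G and H self-adjoint continuous linear operators on E with G ∘ G = id, A and B unitary operators on E, and v ∈ E a unit vector. Define ψ(θ) = B (exp(-I·θ·G)) (A v) and μ(θ) = re ⟪ψ(θ), H ψ(θ)⟫. Then μ is differentiable and μ'(θ) = re ⟪ψ(θ), I·(B G B* H - H B G B*) ψ(θ)⟫, i.e., the derivative equals the expectation of i times the commutator of the conjugated generator B G B⁻¹ with H. -/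
open scoped InnerProductSpace

/-- Derivative of the expectation value along a rotation: with
`ψ(θ) = B (exp(-I·θ·G)) (A v)` and `μ(θ) = re ⟪ψ(θ), H ψ(θ)⟫`, the function `μ` is
differentiable with `μ'(θ) = re ⟪ψ(θ), I·(B G B* H - H B G B*) ψ(θ)⟫`. -/
theorem hasDerivAt_expectation_rotation
    {E : Type*} [NormedAddCommGroup E] [InnerProductSpace ℂ E] [FiniteDimensional ℂ E]
    (G H : E →L[ℂ] E) (hG : IsSelfAdjoint G) (hH : IsSelfAdjoint H) (hG2 : G * G = 1)
    (A B : E →L[ℂ] E) (hA : A ∈ unitary (E →L[ℂ] E)) (hB : B ∈ unitary (E →L[ℂ] E))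
    (v : E) (hv : ‖v‖ = 1)
    (ψ : ℝ → E) (hψ : ∀ θ : ℝ, ψ θ = B ((NormedSpace.exp ((-(Complex.I * (θ : ℂ))) • G)) (A v)))
    (μ : ℝ → ℝ) (hμ : ∀ θ : ℝ, μ θ = Complex.re ⟪ψ θ, H (ψ θ)⟫_ℂ) :
    ∀ θ : ℝ, HasDerivAt μ
      (Complex.re ⟪ψ θ,
        (Complex.I •
          ((B * G * ContinuousLinearMap.adjoint B) * H
            - H * (B * G * ContinuousLinearMap.adjoint B))) (ψ θ)⟫_ℂ) θ := by
  intro θ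
  set T : E →L[ℂ] E := (-Complex.I) • G with hT
  set w : E := A v with hw
  have hfun : ∀ t : ℝ, (-(Complex.I * (t : ℂ))) • G = t • T := by
    intro t
    rw [hT, ← algebraMap_smul ℂ t ((-Complex.I) • G), smul_smul]
    congr 1
    simp [Complex.coe_algebraMap]
    ring
  have hψ' : ψ = fun t : ℝ => B ((NormedSpace.exp (t • T)) w) := by
    funext t
    rw [hψ t, hfun t]
  -- derivative of the exponential
  have hBB : ContinuousLinearMap.adjoint B * B = 1 := by
    rw [← ContinuousLinearMap.star_eq_adjoint]; exact hB.1
  have hexp : NormedSpace.exp (𝔸 := E →L[ℂ] E) = NormedSpace.exp :=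
    rfl
  have hD : HasDerivAt (fun t : ℝ => NormedSpace.exp (t • T))
      (NormedSpace.exp (θ • T) * T) θ := by
    rw [← hexp]
    exact hasDerivAt_exp_smul_const T θ
  set D : E →L[ℂ] E := NormedSpace.exp (θ • T) with hDdef
  set L : (E →L[ℂ] E) →L[ℝ] E :=
    ((ContinuousLinearMap.apply ℂ E w).restrictScalars ℝ) with hL
  have hDw : HasDerivAt (fun t : ℝ => (NormedSpace.exp (t • T)) w) ((D * T) w) θ := by
    have := L.hasFDerivAt.comp_hasDerivAt θ hD
    simpa [hL, Function.comp_def] using this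
  have hpsi : HasDerivAt ψ (B ((D * T) w)) θ := by
    rw [hψ']
    have := (B.restrictScalars ℝ).hasFDerivAt.comp_hasDerivAt θ hDw
    simpa [Function.comp_def] using this
  set C : E →L[ℂ] E := B * G * ContinuousLinearMap.adjoint B with hC
  have hCsa : ContinuousLinearMap.adjoint C = C := by
    rw [hC, ← ContinuousLinearMap.star_eq_adjoint]
    simp [star_mul, ContinuousLinearMap.star_eq_adjoint,
      ContinuousLinearMap.adjoint_adjoint, mul_assoc, hG.adjoint_eq]
  have hcomm : T * D = D * T :=
    (((Commute.refl T).smul_right θ).exp_right).eq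
  have hψθ : ψ θ = B (D w) := by rw [hψ θ, hfun θ, hDdef]
  have hval : B ((D * T) w) = (-Complex.I) • C (ψ θ) := by
    have h1 : C (ψ θ) = B (G (D w)) := by
      rw [hψθ, hC]
      have : ContinuousLinearMap.adjoint B (B (D w)) = D w := by
        have := congrArg (fun (f : E →L[ℂ] E) => f (D w)) hBB
        simpa using this
      simp [ContinuousLinearMap.mul_apply, this]
    rw [h1, ← hcomm]
    simp [ContinuousLinearMap.mul_apply, hT, ContinuousLinearMap.smul_apply]
  rw [hval] at hpsi
  have hHpsi : HasDerivAt (fun t => H (ψ t)) (H ((-Complex.I) • C (ψ θ))) θ := by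
    have := (H.restrictScalars ℝ).hasFDerivAt.comp_hasDerivAt θ hpsi
    simpa [Function.comp_def] using this
  have hinner := HasDerivAt.inner ℂ hpsi hHpsi
  have hre := Complex.reCLM.hasFDerivAt.comp_hasDerivAt θ hinner
  have hμfun : μ = fun t => Complex.re ⟪ψ t, H (ψ t)⟫_ℂ := funext hμ
  rw [hμfun]
  have hre' : HasDerivAt (fun t => Complex.re ⟪ψ t, H (ψ t)⟫_ℂ)
      (Complex.reCLM (⟪ψ θ, H ((-Complex.I) • C (ψ θ))⟫_ℂ + ⟪(-Complex.I) • C (ψ θ), H (ψ θ)⟫_ℂ)) θ := hre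
  convert hre' using 1
  have hadj : ⟪C (ψ θ), H (ψ θ)⟫_ℂ = ⟪ψ θ, C (H (ψ θ))⟫_ℂ := by
    conv_lhs => rw [← hCsa]
    exact ContinuousLinearMap.adjoint_inner_left C _ _
  simp only [ContinuousLinearMap.smul_apply, ContinuousLinearMap.sub_apply,
    ContinuousLinearMap.mul_apply, inner_smul_right, inner_smul_left,
    inner_sub_right, map_smul, Complex.reCLM_apply]
  rw [hadj]
  ring_nf
  simp [Complex.conj_I]
  ring
end

section
/- (Parameter-shift rule.) Let E be a finite-dimensional complex inner product space, G and H self-adjoint continuous linear operators on E with G ∘ G = id, A and B unitary operators on E, and v ∈ E a unit vector. Define ψ(θ) = B (exp(-I·(θ/2)·G)) (A v) and μ(θ) = re ⟪ψ(θ), H ψ(θ)⟫. Then μ is differentiable and for every θ ∈ ℝ, μ'(θ) = (μ(θ + π/2) - μ(θ - π/2)) / 2. -/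
open scoped InnerProductSpace
open scoped Nat

private theorem exp_invol_aux {E : Type*} [NormedAddCommGroup E] [InnerProductSpace ℂ E]
    [FiniteDimensional ℂ E] (G : E →L[ℂ] E) (hG2 : G * G = 1) (s : ℂ) :
    NormedSpace.exp ((-(Complex.I * s)) • G)
      = Complex.cos s • (1 : E →L[ℂ] E) + (-(Complex.I * Complex.sin s)) • G := by
  set c : ℂ := -(Complex.I * s) with hc
  have hc2 : c ^ 2 = -(s ^ 2) := by rw [hc]; ring_nf; rw [Complex.I_sq]; ring
  have hGe : ∀ k : ℕ, G ^ (2 * k) = 1 := by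
    intro k; rw [pow_mul, pow_two, hG2, one_pow]
  have hGo : ∀ k : ℕ, G ^ (2 * k + 1) = G := by
    intro k; rw [pow_succ, hGe, one_mul]
  set f : ℕ → (E →L[ℂ] E) := fun n => ((n ! : ℂ)⁻¹) • (c • G) ^ n with hf
  have heven : HasSum (fun k : ℕ => f (2 * k))
      (Complex.cos s • (1 : E →L[ℂ] E)) := by
    have := (Complex.hasSum_cos s).smul_const (1 : E →L[ℂ] E)
    convert this using 2 with k
    rw [hf]; simp only
    rw [smul_pow, hGe, smul_smul]
    congr 1
    rw [pow_mul, hc2]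
    field_simp; ring
  have hodd : HasSum (fun k : ℕ => f (2 * k + 1))
      ((-(Complex.I * Complex.sin s)) • G) := by
    have := ((Complex.hasSum_sin s).mul_left (-Complex.I)).smul_const G
    have h2 : -(Complex.I * Complex.sin s) = -Complex.I * Complex.sin s := by ring
    rw [h2]
    convert this using 2 with k
    rw [hf]; simp only
    rw [smul_pow, hGo, smul_smul]
    congr 1
    rw [pow_succ, pow_mul, hc2]
    field_simp; ring
  have hsum : HasSum f (Complex.cos s • (1 : E →L[ℂ] E) + (-(Complex.I * Complex.sin s)) • G) :=
    heven.even_add_odd hodd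
  rw [NormedSpace.exp_eq_tsum ℂ]
  exact hsum.tsum_eq

private theorem inner_expand_aux {E : Type*} [NormedAddCommGroup E] [InnerProductSpace ℂ E]
    (H : E →L[ℂ] E) (a b : E) (p q : ℝ) :
    Complex.re ⟪(p:ℂ) • a + (-(Complex.I * (q:ℂ))) • b,
        H ((p:ℂ) • a + (-(Complex.I * (q:ℂ))) • b)⟫_ℂ
      = p^2 * Complex.re ⟪a, H a⟫_ℂ + q^2 * Complex.re ⟪b, H b⟫_ℂ
        + p * q * (Complex.re (Complex.I * ⟪b, H a⟫_ℂ) - Complex.re (Complex.I * ⟪a, H b⟫_ℂ)) := by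
  simp only [map_add, map_smul, inner_add_left, inner_add_right, inner_smul_left,
    inner_smul_right, map_neg, map_mul, Complex.conj_I, Complex.conj_ofReal]
  simp only [Complex.add_re, Complex.mul_re, Complex.neg_re, Complex.neg_im,
    Complex.mul_im, Complex.add_im, Complex.I_re, Complex.I_im, Complex.ofReal_re,
    Complex.ofReal_im]
  ring

private theorem trig_deriv_aux (c0 c1 c2 : ℝ) (μ : ℝ → ℝ)
    (h : ∀ t : ℝ, μ t = c0 + c1 * Real.cos t + c2 * Real.sin t) (θ : ℝ) :
    HasDerivAt μ ((μ (θ + Real.pi / 2) - μ (θ - Real.pi / 2)) / 2) θ := by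
  have hg : HasDerivAt (fun t => c0 + c1 * Real.cos t + c2 * Real.sin t)
      (0 + c1 * (-Real.sin θ) + c2 * Real.cos θ) θ :=
    ((hasDerivAt_const θ c0).add ((Real.hasDerivAt_cos θ).const_mul c1)).add
      ((Real.hasDerivAt_sin θ).const_mul c2)
  have hμg : HasDerivAt μ (0 + c1 * (-Real.sin θ) + c2 * Real.cos θ) θ := by
    refine hg.congr_of_eventuallyEq ?_
    filter_upwards with t using (h t)
  convert hμg using 1
  rw [h, h]
  rw [Real.cos_add, Real.sin_add, Real.cos_sub, Real.sin_sub,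
    Real.cos_pi_div_two, Real.sin_pi_div_two]
  ring


/-- Parameter-shift rule: with `ψ(θ) = B (exp(-I·(θ/2)·G)) (A v)` and
`μ(θ) = re ⟪ψ(θ), H ψ(θ)⟫`, `μ` is differentiable and
`μ'(θ) = (μ(θ + π/2) - μ(θ - π/2)) / 2`. -/
theorem parameter_shift_rule
    {E : Type*} [NormedAddCommGroup E] [InnerProductSpace ℂ E] [FiniteDimensional ℂ E]
    (G H : E →L[ℂ] E) (hG : IsSelfAdjoint G) (hH : IsSelfAdjoint H) (hG2 : G * G = 1)
    (A B : E →L[ℂ] E) (hA : A ∈ unitary (E →L[ℂ] E)) (hB : B ∈ unitary (E →L[ℂ] E))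
    (v : E) (hv : ‖v‖ = 1)
    (ψ : ℝ → E)
    (hψ : ∀ t : ℝ, ψ t = B ((NormedSpace.exp ((-(Complex.I * ((t / 2 : ℝ) : ℂ))) • G)) (A v)))
    (μ : ℝ → ℝ) (hμ : ∀ t : ℝ, μ t = Complex.re ⟪ψ t, H (ψ t)⟫_ℂ) :
    ∀ θ : ℝ, HasDerivAt μ ((μ (θ + Real.pi / 2) - μ (θ - Real.pi / 2)) / 2) θ := by
  set a : E := B (A v) with ha
  set b : E := B (G (A v)) with hb
  have hψ' : ∀ t : ℝ, ψ t = ((Real.cos (t/2) : ℝ) : ℂ) • a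
      + (-(Complex.I * ((Real.sin (t/2) : ℝ) : ℂ))) • b := by
    intro t
    rw [hψ t, exp_invol_aux G hG2 ((t/2 : ℝ) : ℂ)]
    simp only [ContinuousLinearMap.add_apply, ContinuousLinearMap.smul_apply,
      ContinuousLinearMap.one_apply, map_add, map_smul]
    rw [← Complex.ofReal_cos, ← Complex.ofReal_sin]
  set α : ℝ := Complex.re ⟪a, H a⟫_ℂ with hα
  set β : ℝ := Complex.re ⟪b, H b⟫_ℂ with hβ
  set γ : ℝ := Complex.re (Complex.I * ⟪b, H a⟫_ℂ) - Complex.re (Complex.I * ⟪a, H b⟫_ℂ) with hγ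
  have hform : ∀ t : ℝ, μ t = (α + β) / 2 + ((α - β) / 2) * Real.cos t + (γ / 2) * Real.sin t := by
    intro t
    rw [hμ t, hψ' t, inner_expand_aux]
    have hc : Real.cos (t/2) ^ 2 = 1 / 2 + Real.cos (2 * (t/2)) / 2 := Real.cos_sq (t/2)
    have hs : Real.sin (t/2) ^ 2 = 1 - Real.cos (t/2) ^ 2 := by
      have := Real.sin_sq_add_cos_sq (t/2); linarith
    have hsc : Real.sin (t/2) * Real.cos (t/2) = Real.sin (2 * (t/2)) / 2 := by
      rw [Real.sin_two_mul]; ring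
    have h2 : 2 * (t/2) = t := by ring
    rw [h2] at hc hsc
    rw [hs, hc, mul_comm (Real.cos (t/2)) (Real.sin (t/2)), hsc, hα, hβ, hγ]
    ring
  intro θ
  exact trig_deriv_aux _ _ _ μ hform θ
end

section
/- (Theorem 2, per-iteration decrease.) Let E be a real inner product space, L > 0, a > 1, and f : E → ℝ a differentiable function whose gradient ∇f is Lipschitz with constant L. Let θ, g ∈ E with g ≠ 0, and set α = 2·|⟪∇f(θ), g⟫| / (a·L·‖g‖²). Then min (f(θ - α • g)) (f(θ + α • g)) - f(θ) ≤ -(2/(a·L)) · (1 - 1/a) · ⟪∇f(θ), g⟫² / ‖g‖². -/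
open scoped InnerProductSpace

lemma descent_lemma
    {E : Type*} [NormedAddCommGroup E] [InnerProductSpace ℝ E] [CompleteSpace E]
    (L : NNReal)
    (f : E → ℝ) (gradf : E → E)
    (hf : ∀ x, HasGradientAt f (gradf x) x)
    (hLip : LipschitzWith L gradf) (x v : E) :
    f (x + v) ≤ f x + ⟪gradf x, v⟫_ℝ + (L : ℝ) / 2 * ‖v‖ ^ 2 := by
  set C : ℝ := (L : ℝ) * ‖v‖ ^ 2 with hC
  have hφ : ∀ t : ℝ, HasDerivAt (fun t : ℝ => f (x + t • v)) ⟪gradf (x + t • v), v⟫_ℝ t := by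
    intro t
    have h1 : HasDerivAt (fun t : ℝ => x + t • v) v t := by
      simpa using ((hasDerivAt_id t).smul_const v).const_add x
    have := (hf (x + t • v)).hasFDerivAt.comp_hasDerivAt t h1
    simp at this
    exact this
  set ψ : ℝ → ℝ := fun t => f (x + t • v) - t * ⟪gradf x, v⟫_ℝ - t ^ 2 * (C / 2) with hψdef
  have hψ : ∀ t : ℝ, HasDerivAt ψ (⟪gradf (x + t • v), v⟫_ℝ - ⟪gradf x, v⟫_ℝ - t * C) t := by
    intro t
    have h2 : HasDerivAt (fun t : ℝ => t * ⟪gradf x, v⟫_ℝ) ⟪gradf x, v⟫_ℝ t := by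
      simpa using (hasDerivAt_id t).mul_const ⟪gradf x, v⟫_ℝ
    have h3 : HasDerivAt (fun t : ℝ => t ^ 2 * (C / 2)) (t * C) t := by
      have := (hasDerivAt_pow 2 t).mul_const (C / 2)
      refine this.congr_deriv ?_
      norm_num
      ring
    exact ((hφ t).sub h2).sub h3
  have hanti : AntitoneOn ψ (Set.Icc 0 1) := by
    apply antitoneOn_of_deriv_nonpos (convex_Icc 0 1)
    · exact fun t _ => (hψ t).continuousAt.continuousWithinAt
    · exact fun t _ => (hψ t).differentiableAt.differentiableWithinAt
    · intro t ht
      rw [interior_Icc] at ht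
      rw [(hψ t).deriv]
      have h4 : ⟪gradf (x + t • v) - gradf x, v⟫_ℝ ≤ t * C := by
        calc ⟪gradf (x + t • v) - gradf x, v⟫_ℝ ≤ ‖gradf (x + t • v) - gradf x‖ * ‖v‖ :=
              real_inner_le_norm _ _
          _ ≤ ((L : ℝ) * ‖t • v‖) * ‖v‖ := by
              have h6 : ‖gradf (x + t • v) - gradf x‖ ≤ (L : ℝ) * ‖t • v‖ := by
                have := hLip.dist_le_mul (x + t • v) x
                simpa [dist_eq_norm] using this
              exact mul_le_mul_of_nonneg_right h6 (norm_nonneg v)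
          _ = (L : ℝ) * (|t| * ‖v‖) * ‖v‖ := by rw [norm_smul]; simp [Real.norm_eq_abs]
          _ = t * C := by rw [abs_of_pos ht.1, hC]; ring
      have := inner_sub_left (𝕜 := ℝ) (gradf (x + t • v)) (gradf x) v
      rw [this] at h4
      linarith
  have h01 : ψ 1 ≤ ψ 0 := hanti (Set.mem_Icc.2 ⟨le_refl 0, zero_le_one⟩)
      (Set.mem_Icc.2 ⟨zero_le_one, le_refl 1⟩) zero_le_one
  simp only [hψdef, one_smul, zero_smul, add_zero, one_pow, one_mul, zero_pow, zero_mul,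
    sub_zero] at h01
  linarith


/-- Theorem 2 (per-iteration decrease): with step-size
`α = 2|⟪∇f(θ), g⟫| / (a·L·‖g‖²)` for `a > 1`,
`min (f(θ - α•g)) (f(θ + α•g)) - f(θ) ≤ -(2/(aL))·(1 - 1/a)·⟪∇f(θ), g⟫²/‖g‖²`. -/
theorem per_iteration_decrease
    {E : Type*} [NormedAddCommGroup E] [InnerProductSpace ℝ E] [CompleteSpace E]
    (L : NNReal) (hL : 0 < L) (a : ℝ) (ha : 1 < a)
    (f : E → ℝ) (gradf : E → E)
    (hf : ∀ x, HasGradientAt f (gradf x) x)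
    (hLip : LipschitzWith L gradf)
    (θ g : E) (hg : g ≠ 0)
    (α : ℝ) (hα : α = 2 * |⟪gradf θ, g⟫_ℝ| / (a * (L : ℝ) * ‖g‖ ^ 2)) :
    min (f (θ - α • g)) (f (θ + α • g)) - f θ
      ≤ -(2 / (a * (L : ℝ))) * (1 - 1 / a) * (⟪gradf θ, g⟫_ℝ ^ 2 / ‖g‖ ^ 2) := by
  set c : ℝ := ⟪gradf θ, g⟫_ℝ with hc
  have hgn : (0 : ℝ) < ‖g‖ := norm_pos_iff.2 hg
  have hL' : (0 : ℝ) < L := hL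
  have ha0 : (0 : ℝ) < a := lt_trans one_pos ha
  -- two descent inequalities
  have h1 : f (θ + (-α) • g) ≤ f θ + (-α) * c + (L : ℝ) / 2 * (α ^ 2 * ‖g‖ ^ 2) := by
    have := descent_lemma L f gradf hf hLip θ ((-α) • g)
    have e1 : ⟪gradf θ, (-α) • g⟫_ℝ = (-α) * c := real_inner_smul_right _ _ _
    have e2 : ‖(-α) • g‖ ^ 2 = α ^ 2 * ‖g‖ ^ 2 := by
      rw [norm_smul]; rw [mul_pow]; simp [sq_abs]
    rw [e1, e2] at this
    linarith
  have h2 : f (θ + α • g) ≤ f θ + α * c + (L : ℝ) / 2 * (α ^ 2 * ‖g‖ ^ 2) := by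
    have := descent_lemma L f gradf hf hLip θ (α • g)
    have e1 : ⟪gradf θ, α • g⟫_ℝ = α * c := real_inner_smul_right _ _ _
    have e2 : ‖α • g‖ ^ 2 = α ^ 2 * ‖g‖ ^ 2 := by
      rw [norm_smul]; rw [mul_pow]; simp [sq_abs]
    rw [e1, e2] at this
    linarith
  have hsub : θ - α • g = θ + (-α) • g := by rw [neg_smul]; abel
  have hmin : min (f (θ - α • g)) (f (θ + α • g))
      ≤ f θ - α * |c| + (L : ℝ) / 2 * (α ^ 2 * ‖g‖ ^ 2) := by
    rcases abs_cases c with ⟨he, _⟩ | ⟨he, _⟩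
    · refine (min_le_left _ _).trans ?_
      rw [hsub, he]; linarith
    · refine (min_le_right _ _).trans ?_
      rw [he]; linarith
  have heq : - (α * |c|) + (L : ℝ) / 2 * (α ^ 2 * ‖g‖ ^ 2)
      = -(2 / (a * (L : ℝ))) * (1 - 1 / a) * (c ^ 2 / ‖g‖ ^ 2) := by
    have hc2 : |c| ^ 2 = c ^ 2 := sq_abs c
    rw [hα]
    have habs : |c| * |c| = c * c := abs_mul_abs_self c
    field_simp
    linear_combination (1 - a) * habs
  linarith
end
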